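/- arXiv:0912.0537 — 2 statements merged into one kernel-verified Lean document; each statement's English description precedes it below -/
import Mathlib

section
/- Let G be a 2-connected 3-regular graph, let {uv, xy} be a pair of edges whose removal disconnects G into two components, with u,x in one component and v,y in the other. Form G₁ from the component containing u,x by adding the edge ux, and G₂ from the other component by adding the edge vy. Then G is bipartite if and only if both G₁ and G₂ are bipartite. -/
open Equiv

namespace Orth

/-- The setoid of "being on the same cycle" of a permutation. -/
def cycleSetoid {D : Type*} (f : Equiv.Perm D) : Setoid D :=
  ⟨f.SameCycle,
    ⟨fun x => Equiv.Perm.SameCycle.refl f x, fun h => h.symm, fun h h' => h.trans h'⟩⟩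

/-- The number of orbits (cycles, including fixed points) of a permutation. -/
noncomputable def orbCount {D : Type*} (f : Equiv.Perm D) : ℕ :=
  Nat.card (Quotient (cycleSetoid f))

/-- A plane graph: a finite combinatorial map (darts with vertex-rotation `σ` and
edge-involution `α`) of genus 0, i.e. satisfying Euler's formula `V - E + F = 2`.
Vertices are the orbits of `σ`, edges the orbits of `α`, faces the orbits of `σ * α`. -/
structure PlaneGraph where
  D : Type
  fin : Finite D
  nonempty : Nonempty D
  σ : Equiv.Perm D
  α : Equiv.Perm D
  α_invol : ∀ d, α (α d) = d
  α_ne : ∀ d, α d ≠ d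
  sphere : orbCount σ + orbCount (σ * α) = orbCount α + 2

namespace PlaneGraph

variable (M : PlaneGraph)

/-- Vertices of a plane graph. -/
def Vset : Type := Quotient (cycleSetoid M.σ)

/-- Faces of a plane graph. -/
def Fc : Type := Quotient (cycleSetoid (M.σ * M.α))

/-- Edges of a plane graph. -/
def Eset : Type := Quotient (cycleSetoid M.α)

def vertexOf (d : M.D) : M.Vset := Quotient.mk (cycleSetoid M.σ) d
def faceOf (d : M.D) : M.Fc := Quotient.mk (cycleSetoid (M.σ * M.α)) d
def edgeOf (d : M.D) : M.Eset := Quotient.mk (cycleSetoid M.α) d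

/-- Degree of a vertex: the number of darts at it (loops count twice). -/
noncomputable def degree (v : M.Vset) : ℕ := Nat.card {d : M.D // M.vertexOf d = v}

/-- Length of a face: the number of darts on its boundary walk
(so a bridge on the face is counted twice). -/
noncomputable def faceLen (f : M.Fc) : ℕ := Nat.card {d : M.D // M.faceOf d = f}

/-- Connectivity of the plane graph: any dart is reachable from any other using `σ` and `α`. -/
def Connected : Prop :=
  ∀ d d' : M.D, Relation.ReflTransGen (fun a b => b = M.σ a ∨ b = M.α a) d d'

/-- Bipartiteness: a proper 2-coloring of the vertices. -/
def Bipartite : Prop :=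
  ∃ c : M.Vset → Bool, ∀ d : M.D, c (M.vertexOf d) ≠ c (M.vertexOf (M.α d))

/-- Eulerian: connected with all vertex degrees even. -/
def Eulerian : Prop := M.Connected ∧ ∀ v : M.Vset, Even (M.degree v)

/-- The planar dual: faces become vertices, with one dual edge per primal edge. -/
def dual : PlaneGraph where
  D := M.D
  fin := M.fin
  nonempty := M.nonempty
  σ := M.σ * M.α
  α := M.α
  α_invol := M.α_invol
  α_ne := M.α_ne
  sphere := by
    have h : M.σ * M.α * M.α = M.σ := by
      ext d
      simp [Equiv.Perm.mul_apply, M.α_invol]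
    rw [h]
    have := M.sphere
    omega

/-- Vertex `v` lies on face `f`. -/
def vOnFace (v : M.Vset) (f : M.Fc) : Prop := ∃ d, M.vertexOf d = v ∧ M.faceOf d = f

/-- Edge `e` lies on face `f`. -/
def eOnFace (e : M.Eset) (f : M.Fc) : Prop := ∃ d, M.edgeOf d = e ∧ M.faceOf d = f

/-- Vertex `v` is an endpoint of edge `e`. -/
def vOnEdge (v : M.Vset) (e : M.Eset) : Prop := ∃ d, M.vertexOf d = v ∧ M.edgeOf d = e

/-- Simplicity: no loops and no parallel edges. -/
def Simple : Prop :=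
  (∀ d, M.vertexOf (M.α d) ≠ M.vertexOf d) ∧
  ∀ d d' : M.D, M.vertexOf d = M.vertexOf d' → M.vertexOf (M.α d) = M.vertexOf (M.α d') →
    M.edgeOf d = M.edgeOf d'

/-- The underlying simple graph of a plane graph. -/
def graph : SimpleGraph M.Vset where
  Adj u v := u ≠ v ∧ ∃ d, M.vertexOf d = u ∧ M.vertexOf (M.α d) = v
  symm := by
    constructor
    rintro u v ⟨huv, d, h1, h2⟩
    refine ⟨huv.symm, M.α d, h2, ?_⟩
    rw [show M.α (M.α d) = d from M.α_invol d]
    exact h1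
  loopless := by
    constructor
    rintro v ⟨h, -⟩
    exact h rfl

/-- A rainbow partition: each edge gets one of three colors, every face carries all
three colors, around each vertex the colors of consecutive edges alternate between
exactly two colors, and adjacent vertices alternate between different pairs of colors. -/
structure IsRainbow (col : M.D → Fin 3) : Prop where
  edge_consistent : ∀ d, col (M.α d) = col d
  face_all : ∀ (f : M.Fc) (c : Fin 3), ∃ d, M.faceOf d = f ∧ col d = c
  alt_ne : ∀ d, col (M.σ d) ≠ col d
  alt_per : ∀ d, col (M.σ (M.σ d)) = col d
  adj_pairs : ∀ d, col (M.σ d) ≠ col (M.σ (M.α d))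

/-- The monochromatic subgraph of color `x` (as a graph on all vertices). -/
def colorGraph (col : M.D → Fin 3) (x : Fin 3) : SimpleGraph M.Vset where
  Adj u v := u ≠ v ∧ ∃ d, col d = x ∧
    ((M.vertexOf d = u ∧ M.vertexOf (M.α d) = v) ∨
     (M.vertexOf d = v ∧ M.vertexOf (M.α d) = u))
  symm := by
    constructor
    rintro u v ⟨huv, d, hc, h⟩
    exact ⟨huv.symm, d, hc, h.symm⟩
  loopless := by
    constructor
    rintro v ⟨h, -⟩
    exact h rfl

/-- Vertices incident to an edge of color `x`. -/
def colorSupp (col : M.D → Fin 3) (x : Fin 3) : Set M.Vset :=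
  {v | ∃ d, col d = x ∧ M.vertexOf d = v}

end PlaneGraph

/-- 3-connectivity: at least 4 vertices and no cutset of size at most 2. -/
def ThreeConnected {V : Type*} (G : SimpleGraph V) : Prop :=
  4 ≤ Nat.card V ∧ ∀ s : Set V, s.ncard ≤ 2 → (G.induce sᶜ).Connected

/-- 2-connectivity: at least 3 vertices, connected, and no cut vertex. -/
def TwoConnected {V : Type*} (G : SimpleGraph V) : Prop :=
  3 ≤ Nat.card V ∧ G.Connected ∧ ∀ v : V, (G.induce ({v}ᶜ : Set V)).Connected

end Orth

/-!
In a proper 2-colouring of a `k`-regular graph, the degree sums over the two colour classes of a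
vertex set `s` differ only by the numbers of edges leaving `s` from each class, because the edges
inside `s` contribute equally to both sums. Hence these two numbers are congruent modulo `k`. For
a 3-regular graph split by the pair `{uv, xy}`, colouring `u` and `x` alike would put one or two
leaving edges on one side and none on the other, so in a bipartite `G` the ends `u, x` (and then
`v, y`) get different colours. Conversely, colourings of the two split components glue to a
colouring of `G` once the second one is flipped to match across the edge `uv`.
-/

open Finset

namespace SimpleGraph

variable {V : Type*} {G : SimpleGraph V}

section Counting

variable [DecidableRel G.Adj]

theorem Coloring.sum_card_adj_inside_eq (C : G.Coloring Bool) (s : Finset V) (b : Bool) :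
    ∑ a ∈ s with C a = b, #{w ∈ s | G.Adj a w} =
      ∑ a ∈ s with C a = !b, #{w ∈ s | G.Adj a w} := by
  have above : ∀ a ∈ {a ∈ s | C a = b},
      #{w ∈ s | G.Adj a w} = #(bipartiteAbove G.Adj {w ∈ s | C w = !b} a) := by
    intro a ha
    congr 1
    ext w
    simp only [mem_filter] at ha
    simp only [mem_filter, mem_bipartiteAbove, and_congr_left_iff, iff_self_and]
    exact fun hadj _ ↦ ha.2 ▸ Bool.eq_not_of_ne (C.valid hadj).symm
  have below : ∀ w ∈ {w ∈ s | C w = !b},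
      #{a ∈ s | G.Adj w a} = #(bipartiteBelow G.Adj {a ∈ s | C a = b} w) := by
    intro w hw
    congr 1
    ext a
    simp only [mem_filter] at hw
    simp only [mem_filter, mem_bipartiteBelow, G.adj_comm w a, and_congr_left_iff, iff_self_and]
    exact fun hadj _ ↦ by simpa [hw.2] using C.valid hadj
  rw [sum_congr rfl above, sum_congr rfl below]
  exact sum_card_bipartiteAbove_eq_sum_card_bipartiteBelow G.Adj

theorem card_adj_inside_add_card_adj_outside [Fintype V] [DecidableEq V] (s : Finset V) (a : V) :
    #{w ∈ s | G.Adj a w} + #{w ∈ sᶜ | G.Adj a w} = G.degree a := by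
  rw [← card_union_of_disjoint (disjoint_filter_filter disjoint_compl_right), ← filter_union,
    union_compl, ← neighborFinset_eq_filter, card_neighborFinset_eq_degree]

theorem card_filter_adj_product (t s : Finset V) :
    #{p ∈ t ×ˢ s | G.Adj p.1 p.2} = ∑ a ∈ t, #{w ∈ s | G.Adj a w} := by
  simp only [card_filter, sum_product]

theorem IsRegularOfDegree.card_leaving_modEq [Fintype V] [DecidableEq V] {k : ℕ}
    (hG : G.IsRegularOfDegree k) (C : G.Coloring Bool) (s : Finset V) (b : Bool) :
    #{p ∈ {a ∈ s | C a = b} ×ˢ sᶜ | G.Adj p.1 p.2} ≡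
      #{p ∈ {a ∈ s | C a = !b} ×ˢ sᶜ | G.Adj p.1 p.2} [MOD k] := by
  have count : ∀ b', #{p ∈ {a ∈ s | C a = b'} ×ˢ sᶜ | G.Adj p.1 p.2} +
      ∑ a ∈ s with C a = b', #{w ∈ s | G.Adj a w} = k * #{a ∈ s | C a = b'} := by
    intro b'
    rw [card_filter_adj_product, add_comm, ← sum_add_distrib, mul_comm, ← smul_eq_mul,
      ← sum_const]
    exact sum_congr rfl fun a _ ↦ (card_adj_inside_add_card_adj_outside s a).trans (hG a)
  refine Nat.ModEq.add_right_cancel' (∑ a ∈ s with C a = b, #{w ∈ s | G.Adj a w}) ?_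
  rw [count, C.sum_card_adj_inside_eq s b, count]
  exact (Nat.modEq_zero_iff_dvd.2 (dvd_mul_right k _)).trans
    (Nat.modEq_zero_iff_dvd.2 (dvd_mul_right k _)).symm

theorem IsRegularOfDegree.coloring_ne_of_two_edge_cut [Fintype V] [DecidableEq V] {k : ℕ}
    (hG : G.IsRegularOfDegree k) (hk : 3 ≤ k) (C : G.Coloring Bool) {s : Finset V}
    {u v x y : V} (hu : u ∈ s) (hv : v ∉ s) (huv : G.Adj u v)
    (hcut : ∀ a b, G.Adj a b → a ∈ s → b ∉ s → (a = u ∧ b = v) ∨ (a = x ∧ b = y)) :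
    C u ≠ C x := by
  intro hux
  have tail_color : ∀ a b, G.Adj a b → a ∈ s → b ∉ s → C a = C u := by
    intro a b hab ha hb
    rcases hcut a b hab ha hb with ⟨rfl, -⟩ | ⟨rfl, -⟩
    exacts [rfl, hux.symm]
  have none_opposite : #{p ∈ {a ∈ s | C a = !C u} ×ˢ sᶜ | G.Adj p.1 p.2} = 0 := by
    refine card_eq_zero.2 (filter_eq_empty_iff.2 fun p hp hadj ↦ ?_)
    simp only [mem_product, mem_filter, mem_compl] at hp
    exact Bool.not_ne_self (C u) (hp.1.2 ▸ tail_color p.1 p.2 hadj hp.1.1 hp.2)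
  have pos : 0 < #{p ∈ {a ∈ s | C a = C u} ×ˢ sᶜ | G.Adj p.1 p.2} :=
    card_pos.2 ⟨(u, v), by simp [hu, hv, huv]⟩
  have le_two : #{p ∈ {a ∈ s | C a = C u} ×ˢ sᶜ | G.Adj p.1 p.2} ≤ 2 := by
    refine (card_le_card fun p hp ↦ ?_).trans (card_le_two (a := (u, v)) (b := (x, y)))
    simp only [mem_filter, mem_product, mem_compl] at hp
    rcases hcut p.1 p.2 hp.2 hp.1.1.1 hp.1.2 with ⟨h1, h2⟩ | ⟨h1, h2⟩ <;>
      simp [Prod.ext_iff, h1, h2]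
  have modEq := hG.card_leaving_modEq C s (C u)
  rw [none_opposite, Nat.ModEq, Nat.zero_mod, Nat.mod_eq_of_lt (by omega)] at modEq
  omega

end Counting

theorem exists_adj_ne_of_split {S : Set V} {u v x y : V}
    (hsplit : ∀ a b : V, G.Adj a b → a ∈ S → b ∉ S → (a = u ∧ b = v) ∨ (a = x ∧ b = y))
    {c₁ c₂ : V → Bool} (hc₁ : ∀ a b, a ∈ S → b ∈ S → G.Adj a b → c₁ a ≠ c₁ b)
    (hc₂ : ∀ a b, a ∉ S → b ∉ S → G.Adj a b → c₂ a ≠ c₂ b)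
    (huv : c₁ u ≠ c₂ v) (hxy : c₁ x ≠ c₂ y) :
    ∃ c : V → Bool, ∀ a b, G.Adj a b → c a ≠ c b := by
  classical
  have crossing : ∀ a b, G.Adj a b → a ∈ S → b ∉ S → c₁ a ≠ c₂ b := by
    intro a b hab ha hb
    rcases hsplit a b hab ha hb with ⟨rfl, rfl⟩ | ⟨rfl, rfl⟩
    exacts [huv, hxy]
  refine ⟨S.piecewise c₁ c₂, fun a b hab ↦ ?_⟩
  by_cases ha : a ∈ S <;> by_cases hb : b ∈ S <;>
    simp only [Set.piecewise_eq_of_mem, Set.piecewise_eq_of_notMem, ha, hb, not_false_eq_true]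
  · exact hc₁ a b ha hb hab
  · exact crossing a b hab ha hb
  · exact (crossing b a hab.symm hb ha).symm
  · exact hc₂ a b ha hb hab

end SimpleGraph

theorem stmt9_general {V : Type*} [Fintype V] (G : SimpleGraph V)
    (hreg : ∀ v : V, Nat.card {w : V // G.Adj v w} = 3)
    (u v x y : V) (huv : G.Adj u v) (hxy : G.Adj x y)
    (S : Set V) (hu : u ∈ S) (hv : v ∉ S)
    (hsplit : ∀ a b : V, G.Adj a b → a ∈ S → b ∉ S → (a = u ∧ b = v) ∨ (a = x ∧ b = y)) :
    (∃ c : V → Bool, ∀ a b : V, G.Adj a b → c a ≠ c b) ↔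
      ((∃ c : V → Bool, (∀ a b : V, a ∈ S → b ∈ S → G.Adj a b → c a ≠ c b) ∧ c u ≠ c x) ∧
       (∃ c : V → Bool, (∀ a b : V, a ∉ S → b ∉ S → G.Adj a b → c a ≠ c b) ∧ c v ≠ c y)) := by
  classical
  have hG : G.IsRegularOfDegree 3 := fun a ↦ by
    rw [← G.card_neighborSet_eq_degree, ← Nat.card_eq_fintype_card]
    exact hreg a
  constructor
  · rintro ⟨c, hc⟩
    have hux : c u ≠ c x :=
      hG.coloring_ne_of_two_edge_cut le_rfl (SimpleGraph.Coloring.mk c (hc _ _))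
        (s := S.toFinset) (by simpa using hu) (by simpa using hv) huv (by simpa using hsplit)
    have hvy : c v ≠ c y := by
      rw [Bool.eq_not_of_ne (hc u v huv).symm, Bool.eq_not_of_ne (hc x y hxy).symm]
      simpa using hux
    exact ⟨⟨c, fun a b _ _ ↦ hc a b, hux⟩, c, fun a b _ _ ↦ hc a b, hvy⟩
  · rintro ⟨⟨c₁, hc₁, hux⟩, c₂, hc₂, hvy⟩
    -- flip `c₂` so that `v` gets the colour opposite to `u`
    refine SimpleGraph.exists_adj_ne_of_split hsplit hc₁ (c₂ := fun a ↦ c₂ a ^^ (c₂ v ^^ !c₁ u))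
      (fun a b ha hb hab ↦ by simpa using hc₂ a b ha hb hab) ?_ ?_
    · simp
    · revert hux hvy
      generalize c₁ u = p, c₁ x = q, c₂ v = r, c₂ y = t
      decide +revert

/-- Let G be a 2-connected 3-regular graph, split by the edge pair
{uv, xy} into two components: S (containing u and x) and its complement (containing v
and y), with no other edges crossing. Then G is bipartite if and only if both split
components (with the virtual edges ux resp. vy added) are bipartite. -/
theorem stmt9 {V : Type*} [Fintype V] (G : SimpleGraph V)
    (h2c : Orth.TwoConnected G)
    (hreg : ∀ v : V, Nat.card {w : V // G.Adj v w} = 3)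
    (u v x y : V) (huv : G.Adj u v) (hxy : G.Adj x y)
    (S : Set V) (hu : u ∈ S) (hx : x ∈ S) (hv : v ∉ S) (hy : y ∉ S)
    (hsplit : ∀ a b : V, G.Adj a b → a ∈ S → b ∉ S → (a = u ∧ b = v) ∨ (a = x ∧ b = y))
    (hS : (G.induce S).Connected) (hSc : (G.induce Sᶜ).Connected) :
    (∃ c : V → Bool, ∀ a b : V, G.Adj a b → c a ≠ c b) ↔
      ((∃ c : V → Bool, (∀ a b : V, a ∈ S → b ∈ S → G.Adj a b → c a ≠ c b) ∧ c u ≠ c x) ∧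
       (∃ c : V → Bool, (∀ a b : V, a ∉ S → b ∉ S → G.Adj a b → c a ≠ c b) ∧ c v ≠ c y)) :=
  stmt9_general G hreg u v x y huv hxy S hu hv hsplit
end

section
/- Let Δ be a maximal planar graph whose edges are partitioned into three color classes (red, blue, green) such that every triangular face contains one edge of each color and such that around every vertex the edges alternate in cyclic order between exactly two of the colors, with adjacent vertices alternating between different pairs of colors. Then every 4-cycle in Δ is colored either with all four edges the same color, or with two colors in the cyclic pattern red–red–blue–blue (two consecutive edges of one color followed by two consecutive edges of another). In particular, no 4-cycle has color pattern red–blue–red–blue, red–blue–red–green, or red–red–blue–green. -/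
open Equiv

/-! Each vertex sees exactly two colours, so it misses exactly one; the rainbow condition makes
the missing colours of adjacent vertices differ, and an edge carries the one colour missing at
neither endpoint. Along a 4-cycle the missing colours thus form a proper 3-colouring of `C₄`,
which determines the edge colours, and the few such colourings give the two patterns. -/

theorem Equiv.Perm.SameCycle.apply_eq_of_forall_apply_eq {α β : Type*} {f : Equiv.Perm α}
    {g : α → β} (hg : ∀ x, g (f x) = g x) {x y : α} (h : f.SameCycle x y) : g x = g y := by
  obtain ⟨i, rfl⟩ := h
  refine (zpow_induction_right (P := fun p : Equiv.Perm α => ∀ x, g (p x) = g x)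
    (fun _ => Eq.refl _) (fun p hp x => ?_) (fun p hp x => ?_) i x).symm
  · rw [Equiv.Perm.mul_apply, hp, hg]
  · rw [Equiv.Perm.mul_apply, hp, ← hg, Equiv.Perm.coe_inv, Equiv.apply_symm_apply]

theorem Fin.three_ne_neg_add_self {a b : Fin 3} (hab : a ≠ b) : a ≠ -(a + b) := by
  revert a b; decide

theorem Fin.three_eq_neg_add_of_ne {a b c : Fin 3} (hab : a ≠ b) (hca : c ≠ a) (hcb : c ≠ b) :
    c = -(a + b) := by
  revert a b c; decide

theorem Fin.three_neg_add_fourCycle {p q r s : Fin 3}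
    (hpq : p ≠ q) (hqr : q ≠ r) (hrs : r ≠ s) (hsp : s ≠ p) :
    (-(p + q) = -(q + r) ∧ -(q + r) = -(r + s) ∧ -(r + s) = -(s + p)) ∨
    (-(p + q) = -(q + r) ∧ -(r + s) = -(s + p) ∧ -(p + q) ≠ -(r + s)) ∨
    (-(q + r) = -(r + s) ∧ -(s + p) = -(p + q) ∧ -(q + r) ≠ -(s + p)) := by
  revert p q r s; decide

namespace Orth.PlaneGraph

variable {M : PlaneGraph} {col : M.D → Fin 3}

/-- The colour absent at the vertex of `d`: the colours around a vertex alternate between two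
colours, and in `Fin 3` the colour other than distinct `a`, `b` is `-(a + b)`,
as `0 + 1 + 2 = 0`. -/
def missingColor (col : M.D → Fin 3) (d : M.D) : Fin 3 := -(col d + col (M.σ d))

namespace IsRainbow

variable (hrb : M.IsRainbow col)
include hrb

theorem missingColor_eq_of_vertexOf_eq {d d' : M.D} (h : M.vertexOf d = M.vertexOf d') :
    missingColor col d = missingColor col d' :=
  (Quotient.exact h : M.σ.SameCycle d d').apply_eq_of_forall_apply_eq fun d => by
    rw [missingColor, missingColor, hrb.alt_per, add_comm]

theorem missingColor_ne_alpha (d : M.D) : missingColor col d ≠ missingColor col (M.α d) := by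
  rw [missingColor, missingColor, hrb.edge_consistent, ne_eq, neg_inj, add_right_inj]
  exact hrb.adj_pairs d

theorem col_ne_missingColor (d : M.D) : col d ≠ missingColor col d :=
  Fin.three_ne_neg_add_self (hrb.alt_ne d).symm

theorem col_eq_neg_add_missingColor (d : M.D) :
    col d = -(missingColor col d + missingColor col (M.α d)) :=
  Fin.three_eq_neg_add_of_ne (hrb.missingColor_ne_alpha d) (hrb.col_ne_missingColor d)
    (hrb.edge_consistent d ▸ hrb.col_ne_missingColor (M.α d))

theorem missingColor_ne_of_vertexOf_alpha_eq {d d' : M.D}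
    (h : M.vertexOf (M.α d) = M.vertexOf d') :
    missingColor col d ≠ missingColor col d' :=
  hrb.missingColor_eq_of_vertexOf_eq h ▸ hrb.missingColor_ne_alpha d

end IsRainbow

end Orth.PlaneGraph

theorem stmt12_general (M : Orth.PlaneGraph)
    (col : M.D → Fin 3) (hrb : M.IsRainbow col)
    (d₀ d₁ d₂ d₃ : M.D)
    (h01 : M.vertexOf (M.α d₀) = M.vertexOf d₁)
    (h12 : M.vertexOf (M.α d₁) = M.vertexOf d₂)
    (h23 : M.vertexOf (M.α d₂) = M.vertexOf d₃)
    (h30 : M.vertexOf (M.α d₃) = M.vertexOf d₀) :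
    (col d₀ = col d₁ ∧ col d₁ = col d₂ ∧ col d₂ = col d₃) ∨
    (col d₀ = col d₁ ∧ col d₂ = col d₃ ∧ col d₀ ≠ col d₂) ∨
    (col d₁ = col d₂ ∧ col d₃ = col d₀ ∧ col d₁ ≠ col d₃) := by
  simp only [hrb.col_eq_neg_add_missingColor, hrb.missingColor_eq_of_vertexOf_eq h01,
    hrb.missingColor_eq_of_vertexOf_eq h12, hrb.missingColor_eq_of_vertexOf_eq h23,
    hrb.missingColor_eq_of_vertexOf_eq h30]
  exact Fin.three_neg_add_fourCycle (hrb.missingColor_ne_of_vertexOf_alpha_eq h01)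
    (hrb.missingColor_ne_of_vertexOf_alpha_eq h12) (hrb.missingColor_ne_of_vertexOf_alpha_eq h23)
    (hrb.missingColor_ne_of_vertexOf_alpha_eq h30)

/-- In a maximal planar graph with a rainbow partition of its edges into
three colors, every 4-cycle is colored either with all four edges the same color, or
with two colors in the cyclic pattern c–c–c'–c' (two consecutive edges of one color
followed by two consecutive edges of another). -/
theorem stmt12 (M : Orth.PlaneGraph) (hs : M.Simple) (hk : 4 ≤ Nat.card M.Vset)
    (htri : ∀ f : M.Fc, M.faceLen f = 3)
    (col : M.D → Fin 3) (hrb : M.IsRainbow col)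
    (d₀ d₁ d₂ d₃ : M.D)
    (h01 : M.vertexOf (M.α d₀) = M.vertexOf d₁)
    (h12 : M.vertexOf (M.α d₁) = M.vertexOf d₂)
    (h23 : M.vertexOf (M.α d₂) = M.vertexOf d₃)
    (h30 : M.vertexOf (M.α d₃) = M.vertexOf d₀)
    (hdist : [M.vertexOf d₀, M.vertexOf d₁, M.vertexOf d₂, M.vertexOf d₃].Nodup) :
    (col d₀ = col d₁ ∧ col d₁ = col d₂ ∧ col d₂ = col d₃) ∨
    (col d₀ = col d₁ ∧ col d₂ = col d₃ ∧ col d₀ ≠ col d₂) ∨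
    (col d₁ = col d₂ ∧ col d₃ = col d₀ ∧ col d₁ ≠ col d₃) :=
  stmt12_general M col hrb d₀ d₁ d₂ d₃ h01 h12 h23 h30
end
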